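/- Let H be a connected k-uniform hypergraph with at least one edge, maximum degree Δ, minimum degree δ, and signless Laplacian eigenpair (ρ, x). Then (δ/Δ)·γ(H) ≤ Γ(H) ≤ γ(H). Moreover, if H is regular then both inequalities are equalities. -/

import Mathlib

open Finset Matrix

variable {V : Type*} [Fintype V] [DecidableEq V]

/-- The incidence matrix of a hypergraph with vertex type `V` and edge set `E`:
`B(v,e) = 1` if `v ∈ e` and `0` otherwise. -/
def inc (E : Finset (Finset V)) : Matrix V ↥E ℝ :=
  fun v e => if v ∈ (e : Finset V) then 1 else 0

/-- The signless Laplacian matrix `Q = B * Bᵀ`. -/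
def signlessLap (E : Finset (Finset V)) : Matrix V V ℝ :=
  inc E * (inc E)ᵀ

/-- The degree of a vertex: the number of edges containing it. -/
def deg (E : Finset (Finset V)) (v : V) : ℕ :=
  (E.filter fun e => v ∈ e).card

/-- A hypergraph is connected if the reflexive-transitive closure of the relation
"`u ≠ v` and some edge contains both `u` and `v`" relates every pair of vertices. -/
def HConnected (E : Finset (Finset V)) : Prop :=
  ∀ u v : V, Relation.ReflTransGen (fun a b => a ≠ b ∧ ∃ e ∈ E, a ∈ e ∧ b ∈ e) u v

/-- A hypergraph is regular if all vertices have the same degree. -/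
def HRegular (E : Finset (Finset V)) : Prop :=
  ∃ r, ∀ v : V, deg E v = r

/-- A signless Laplacian eigenpair `(ρ, x)`: `x` is entrywise positive,
normalized by `∑ v, x v ^ 2 = 1`, and `Q x = ρ x`. -/
def Eigenpair (E : Finset (Finset V)) (ρ : ℝ) (x : V → ℝ) : Prop :=
  (∀ v, 0 < x v) ∧ (∑ v, x v ^ 2 = 1) ∧ (signlessLap E).mulVec x = ρ • x

/-!
Evaluating the eigen-equation `Q x = ρ x` at a vertex `v` gives `ρ x_v = ∑_{e ∋ v} x(e)`, a sum of
`d(v)` edge sums. At a vertex where `x` is maximal this yields `ρ x_max ≤ Δ x(max)`, and at one where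
`x` is minimal `δ x(min) ≤ ρ x_min`; dividing gives the lower bound. The upper bound only uses that
every edge has `k` vertices, so `k x_min ≤ x(e) ≤ k x_max`. For regular `H` we have `δ / Δ = 1`, and
the two bounds squeeze `Γ(H)` to `γ(H)`.
-/

section EdgeSums

variable {α : Type*} {E : Finset (Finset α)} {x : α → ℝ}

theorem edgeSum_min_pos (hpos : ∀ v, 0 < x v) (hne : ∀ e ∈ E, e.Nonempty) {xemin : ℝ}
    (hemin : IsLeast ((fun e : Finset α => ∑ v ∈ e, x v) '' ↑E) xemin) : 0 < xemin := by
  obtain ⟨e, he, rfl⟩ := hemin.1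
  exact Finset.sum_pos (fun v _ => hpos v) (hne e he)

theorem edgeRatio_le_vertexRatio {k : ℕ} (hk : 0 < k) (hunif : ∀ e ∈ E, e.card = k)
    (hpos : ∀ v, 0 < x v) {xmax xmin xemax xemin : ℝ} (hmax : IsGreatest (Set.range x) xmax)
    (hmin : IsLeast (Set.range x) xmin)
    (hemax : IsGreatest ((fun e : Finset α => ∑ v ∈ e, x v) '' ↑E) xemax)
    (hemin : IsLeast ((fun e : Finset α => ∑ v ∈ e, x v) '' ↑E) xemin) :
    xemax / xemin ≤ xmax / xmin := by
  obtain ⟨emax, hemaxE, rfl⟩ := hemax.1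
  obtain ⟨emin, heminE, rfl⟩ := hemin.1
  have hxmin : 0 < xmin := by obtain ⟨w, rfl⟩ := hmin.1; exact hpos w
  have hupper : ∑ v ∈ emax, x v ≤ k * xmax := by
    rw [← hunif emax hemaxE, ← nsmul_eq_mul]
    exact Finset.sum_le_card_nsmul _ _ _ fun v _ => hmax.2 (Set.mem_range_self v)
  have hlower : k * xmin ≤ ∑ v ∈ emin, x v := by
    rw [← hunif emin heminE, ← nsmul_eq_mul]
    exact Finset.card_nsmul_le_sum _ _ _ fun v _ => hmin.2 (Set.mem_range_self v)
  calc (∑ v ∈ emax, x v) / ∑ v ∈ emin, x v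
      ≤ (k * xmax) / (k * xmin) :=
        div_le_div₀ (hupper.trans' (Finset.sum_nonneg fun v _ => (hpos v).le)) hupper
          (by positivity) hlower
    _ = xmax / xmin := mul_div_mul_left _ _ (by positivity)

end EdgeSums

section Degrees

variable {α : Type*} [DecidableEq α] {E : Finset (Finset α)}

theorem deg_pos_of_mem {e : Finset α} {v : α} (he : e ∈ E) (hv : v ∈ e) : 0 < deg E v :=
  Finset.card_pos.mpr ⟨e, Finset.mem_filter.mpr ⟨he, hv⟩⟩

theorem maxDeg_pos {Δ : ℕ} (hΔ : IsGreatest (Set.range (deg E)) Δ) {e : Finset α} (he : e ∈ E)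
    (hne : e.Nonempty) : 0 < Δ := by
  obtain ⟨v, hv⟩ := hne
  exact (deg_pos_of_mem he hv).trans_le (hΔ.2 (Set.mem_range_self v))

theorem HRegular.minDeg_eq_maxDeg (hreg : HRegular E) {Δ δ : ℕ}
    (hΔ : IsGreatest (Set.range (deg E)) Δ) (hδ : IsLeast (Set.range (deg E)) δ) : δ = Δ := by
  obtain ⟨r, hr⟩ := hreg
  obtain ⟨a, rfl⟩ := hΔ.1
  obtain ⟨b, rfl⟩ := hδ.1
  rw [hr a, hr b]

end Degrees

section SignlessLaplacian

variable {E : Finset (Finset V)} {x : V → ℝ}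

theorem signlessLap_mulVec_apply (E : Finset (Finset V)) (x : V → ℝ) (v : V) :
    (signlessLap E *ᵥ x) v = ∑ e ∈ E with v ∈ e, ∑ w ∈ e, x w := by
  have hedge : (inc E)ᵀ *ᵥ x = fun e : ↥E => ∑ w ∈ (e : Finset V), x w := by
    funext e
    simp [mulVec, inc, dotProduct, ite_mul, Finset.sum_ite_mem]
  rw [signlessLap, ← mulVec_mulVec, hedge]
  simp only [mulVec, inc, dotProduct, ite_mul, one_mul, zero_mul]
  rw [Finset.sum_coe_sort E (fun e => if v ∈ e then ∑ w ∈ e, x w else 0), Finset.sum_filter]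

theorem signlessLap_mulVec_apply_le {M : ℝ} (hM : ∀ e ∈ E, ∑ w ∈ e, x w ≤ M) (v : V) :
    (signlessLap E *ᵥ x) v ≤ deg E v * M := by
  rw [signlessLap_mulVec_apply, deg, ← nsmul_eq_mul]
  exact Finset.sum_le_card_nsmul _ _ _ fun e he => hM e (Finset.mem_filter.mp he).1

theorem le_signlessLap_mulVec_apply {m : ℝ} (hm : ∀ e ∈ E, m ≤ ∑ w ∈ e, x w) (v : V) :
    deg E v * m ≤ (signlessLap E *ᵥ x) v := by
  rw [signlessLap_mulVec_apply, deg, ← nsmul_eq_mul]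
  exact Finset.card_nsmul_le_sum _ _ _ fun e he => hm e (Finset.mem_filter.mp he).1

theorem degRatio_mul_vertexRatio_le_edgeRatio {ρ : ℝ} (heig : signlessLap E *ᵥ x = ρ • x)
    (hpos : ∀ v, 0 < x v) (hne : ∀ e ∈ E, e.Nonempty) {Δ δ : ℕ}
    (hΔ : IsGreatest (Set.range (deg E)) Δ) (hδ : IsLeast (Set.range (deg E)) δ)
    {xmax xmin xemax xemin : ℝ} (hmax : IsGreatest (Set.range x) xmax)
    (hmin : IsLeast (Set.range x) xmin)
    (hemax : IsGreatest ((fun e : Finset V => ∑ v ∈ e, x v) '' ↑E) xemax)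
    (hemin : IsLeast ((fun e : Finset V => ∑ v ∈ e, x v) '' ↑E) xemin) :
    (δ : ℝ) / Δ * (xmax / xmin) ≤ xemax / xemin := by
  have heig_apply (v : V) : (signlessLap E *ᵥ x) v = ρ * x v := congrFun heig v
  have hxemin := edgeSum_min_pos hpos hne hemin
  have hxemax : 0 ≤ xemax := hxemin.le.trans (hemax.2 hemin.1)
  have hΔpos : (0 : ℝ) < Δ := by
    obtain ⟨e, he, -⟩ := hemax.1
    exact_mod_cast maxDeg_pos hΔ he (hne e he)
  obtain ⟨u, rfl⟩ := hmax.1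
  obtain ⟨w, rfl⟩ := hmin.1
  have hρmax : ρ * x u ≤ Δ * xemax := calc
    ρ * x u = (signlessLap E *ᵥ x) u := (heig_apply u).symm
    _ ≤ deg E u * xemax := signlessLap_mulVec_apply_le (fun e he => hemax.2 ⟨e, he, rfl⟩) u
    _ ≤ Δ * xemax := by gcongr; exact_mod_cast hΔ.2 (Set.mem_range_self u)
  have hρmin : δ * xemin ≤ ρ * x w := calc
    δ * xemin ≤ deg E w * xemin := by gcongr; exact_mod_cast hδ.2 (Set.mem_range_self w)
    _ ≤ (signlessLap E *ᵥ x) w := le_signlessLap_mulVec_apply (fun e he => hemin.2 ⟨e, he, rfl⟩) w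
    _ = ρ * x w := heig_apply w
  rw [div_mul_div_comm, div_le_div_iff₀ (mul_pos hΔpos (hpos w)) hxemin]
  linarith [mul_le_mul_of_nonneg_right hρmax (hpos w).le,
    mul_le_mul_of_nonneg_right hρmin (hpos u).le]

end SignlessLaplacian

theorem Gamma_between_general {V : Type*} [Fintype V] [DecidableEq V] (k : ℕ)
    (hk : 2 ≤ k) (E : Finset (Finset V)) (hunif : ∀ e ∈ E, e.card = k)
    (ρ : ℝ) (x : V → ℝ) (hx : Eigenpair E ρ x)
    (Δ δ : ℕ) (hΔ : IsGreatest (Set.range (deg E)) Δ) (hδ : IsLeast (Set.range (deg E)) δ)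
    (xmax xmin : ℝ) (hmax : IsGreatest (Set.range x) xmax)
    (hmin : IsLeast (Set.range x) xmin)
    (xemax xemin : ℝ)
    (hemax : IsGreatest ((fun e : Finset V => ∑ v ∈ e, x v) '' ↑E) xemax)
    (hemin : IsLeast ((fun e : Finset V => ∑ v ∈ e, x v) '' ↑E) xemin) :
    ((δ : ℝ) / (Δ : ℝ) * (xmax / xmin) ≤ xemax / xemin ∧
        xemax / xemin ≤ xmax / xmin) ∧
      (HRegular E →
        (δ : ℝ) / (Δ : ℝ) * (xmax / xmin) = xemax / xemin ∧
          xemax / xemin = xmax / xmin) := by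
  obtain ⟨hpos, -, heig⟩ := hx
  have hne (e : Finset V) (he : e ∈ E) : e.Nonempty := by
    rw [← Finset.card_pos, hunif e he]; omega
  have hlower :=
    degRatio_mul_vertexRatio_le_edgeRatio heig hpos hne hΔ hδ hmax hmin hemax hemin
  have hupper := edgeRatio_le_vertexRatio (by omega) hunif hpos hmax hmin hemax hemin
  refine ⟨⟨hlower, hupper⟩, fun hreg => ?_⟩
  have hratio : (δ : ℝ) / Δ = 1 := by
    obtain ⟨e, he, -⟩ := hemax.1
    rw [hreg.minDeg_eq_maxDeg hΔ hδ, div_self]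
    exact_mod_cast (maxDeg_pos hΔ he (hne e he)).ne'
  rw [hratio, one_mul] at hlower ⊢
  exact ⟨le_antisymm hlower hupper, le_antisymm hupper hlower⟩

/-- For a connected `k`-graph with at least one edge, maximum degree `Δ`, minimum
degree `δ` and signless Laplacian eigenpair `(ρ, x)`:
`(δ/Δ) γ(H) ≤ Γ(H) ≤ γ(H)`, where `γ(H) = x_max/x_min` and `Γ(H) = x(max)/x(min)`;
if `H` is regular both are equalities. -/
theorem Gamma_between {V : Type*} [Fintype V] [DecidableEq V] (k : ℕ)
    (hk : 2 ≤ k) (E : Finset (Finset V)) (hunif : ∀ e ∈ E, e.card = k)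
    (hconn : HConnected E) (hE : E.Nonempty)
    (ρ : ℝ) (x : V → ℝ) (hx : Eigenpair E ρ x)
    (Δ δ : ℕ) (hΔ : IsGreatest (Set.range (deg E)) Δ) (hδ : IsLeast (Set.range (deg E)) δ)
    (xmax xmin : ℝ) (hmax : IsGreatest (Set.range x) xmax)
    (hmin : IsLeast (Set.range x) xmin)
    (xemax xemin : ℝ)
    (hemax : IsGreatest ((fun e : Finset V => ∑ v ∈ e, x v) '' ↑E) xemax)
    (hemin : IsLeast ((fun e : Finset V => ∑ v ∈ e, x v) '' ↑E) xemin) :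
    ((δ : ℝ) / (Δ : ℝ) * (xmax / xmin) ≤ xemax / xemin ∧
        xemax / xemin ≤ xmax / xmin) ∧
      (HRegular E →
        (δ : ℝ) / (Δ : ℝ) * (xmax / xmin) = xemax / xemin ∧
          xemax / xemin = xmax / xmin) :=
  Gamma_between_general k hk E hunif ρ x hx Δ δ hΔ hδ xmax xmin hmax hmin xemax xemin hemax hemin
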